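/- arXiv:1606.01342 — 6 statements merged into one kernel-verified Lean document; each statement's English description precedes it below -/
import Mathlib

section
/- Let G be a connected graph, C, c : E → ℝ, θ ≥ 0, and L an integer. Suppose (X,Y) is a pair of spanning trees of G and there exist α, β : E → ℝ with α(e) ≥ 0, β(e) ≥ 0, α(e) + β(e) = θ for all e ∈ E, such that: (i) X is a minimum spanning tree for the costs C(e) - α(e) and Y is a minimum spanning tree for the costs c(e) - β(e); and (ii) α(e) = 0 for every e ∈ X \ Y and β(e) = 0 for every e ∈ Y \ X. Then (X,Y) minimizes ∑_{e∈X'} C(e) + ∑_{e∈Y'} c(e) - θ·|X' ∩ Y'| + θ·L over all pairs (X',Y') of spanning trees of G. -/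
open Finset

/-- `T` is (the edge set of) a spanning tree of `G`: its edges are edges of `G`
and the graph formed by these edges is a tree (connected and acyclic, spanning all vertices). -/
def IsSpanningTree {V : Type*} (G : SimpleGraph V) (T : Finset (Sym2 V)) : Prop :=
  (T : Set (Sym2 V)) ⊆ G.edgeSet ∧ (SimpleGraph.fromEdgeSet (T : Set (Sym2 V))).IsTree

/-- `f` lies on the unique path in the tree `T` joining the endpoints of `e`:
equivalently, `f ∈ T` and removing `f` disconnects the endpoints of `e` in `T`. -/
def OnTreePath {V : Type*} (T : Finset (Sym2 V)) (e f : Sym2 V) : Prop :=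
  f ∈ T ∧ ∀ u v : V, e = s(u, v) →
    ¬ (SimpleGraph.fromEdgeSet ((T : Set (Sym2 V)) \ {f})).Reachable u v

/-- Path optimality conditions for a spanning tree `T` of `G` with edge costs `w`. -/
def PathOpt {V : Type*} (G : SimpleGraph V) (T : Finset (Sym2 V)) (w : Sym2 V → ℝ) : Prop :=
  ∀ u v : V, s(u, v) ∈ G.edgeSet → s(u, v) ∉ T →
    ∀ f, OnTreePath T s(u, v) f → w f ≤ w (s(u, v))

/-- The sufficient pair optimality conditions of Theorem 2, with explicit witnesses `α`, `β`. -/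
def SuffPairOpt {V : Type*} [Fintype V] [DecidableEq V] (G : SimpleGraph V)
    (C c : Sym2 V → ℝ) (θ : ℝ) (X Y : Finset (Sym2 V)) (α β : Sym2 V → ℝ) : Prop :=
  (∀ e, 0 ≤ α e) ∧ (∀ e, 0 ≤ β e) ∧ (∀ e ∈ G.edgeSet, α e + β e = θ) ∧
  (∀ T, IsSpanningTree G T → ∑ e ∈ X, (C e - α e) ≤ ∑ e ∈ T, (C e - α e)) ∧
  (∀ T, IsSpanningTree G T → ∑ e ∈ Y, (c e - β e) ≤ ∑ e ∈ T, (c e - β e)) ∧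
  (∀ e ∈ X \ Y, α e = 0) ∧ (∀ e ∈ Y \ X, β e = 0)

/-- Arcs of the admissible graph for the pair `(X,Y)` with reduced costs `Cs`, `cs`:
an `X`-arc `(a,b)` with `a ∉ X`, `b ∈ P_X(a)`, `Cs a = Cs b`, or a `Y`-arc `(a,b)`
(i.e. `(v_f,v_e)` with `f = a`, `e = b`) with `b ∉ Y`, `a ∈ P_Y(b)`, `cs b = cs a`. -/
def AdmArc {V : Type*} [Fintype V] [DecidableEq V] (X Y : Finset (Sym2 V))
    (Cs cs : Sym2 V → ℝ) (a b : Sym2 V) : Prop :=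
  (a ∉ X ∧ OnTreePath X a b ∧ Cs a = Cs b) ∨ (b ∉ Y ∧ OnTreePath Y b a ∧ cs b = cs a)

/-- A node of the admissible graph is admissible if it is reachable (by a directed path)
from some node `v_g` with `g ∈ Y \ X`. -/
def AdmNode {V : Type*} [Fintype V] [DecidableEq V] (X Y : Finset (Sym2 V))
    (Cs cs : Sym2 V → ℝ) (h : Sym2 V) : Prop :=
  ∃ g, g ∈ Y ∧ g ∉ X ∧ Relation.ReflTransGen (AdmArc X Y Cs cs) g h

/-- Theorem 2 of the paper: sufficient pair optimality conditions imply
optimality for the Lagrangian objective. -/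
theorem stmt3 {V : Type*} [Fintype V] [DecidableEq V] (G : SimpleGraph V)
    (hG : G.Connected) (C c : Sym2 V → ℝ) (θ : ℝ) (hθ : 0 ≤ θ) (L : ℤ)
    (X Y : Finset (Sym2 V)) (hX : IsSpanningTree G X) (hY : IsSpanningTree G Y)
    (α β : Sym2 V → ℝ) (hcond : SuffPairOpt G C c θ X Y α β) :
    ∀ X' Y' : Finset (Sym2 V), IsSpanningTree G X' → IsSpanningTree G Y' →
      ∑ e ∈ X, C e + ∑ e ∈ Y, c e - θ * ((X ∩ Y).card : ℝ) + θ * (L : ℝ) ≤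
        ∑ e ∈ X', C e + ∑ e ∈ Y', c e - θ * ((X' ∩ Y').card : ℝ) + θ * (L : ℝ) := by
  obtain ⟨hα, hβ, hαβ, hXmin, hYmin, hαX, hβY⟩ := hcond
  intro X' Y' hX' hY'
  have key1 : ∑ e ∈ X, α e + ∑ e ∈ Y, β e = θ * ((X ∩ Y).card : ℝ) := by
    have hXs : ∑ e ∈ X, α e = ∑ e ∈ X ∩ Y, α e := by
      refine (Finset.sum_subset Finset.inter_subset_left ?_).symm
      intro e heX heI
      exact hαX e (Finset.mem_sdiff.mpr ⟨heX, fun h => heI (Finset.mem_inter.mpr ⟨heX, h⟩)⟩)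
    have hYs : ∑ e ∈ Y, β e = ∑ e ∈ X ∩ Y, β e := by
      rw [Finset.inter_comm]
      refine (Finset.sum_subset Finset.inter_subset_left ?_).symm
      intro e heY heI
      exact hβY e (Finset.mem_sdiff.mpr ⟨heY, fun h => heI (Finset.mem_inter.mpr ⟨heY, h⟩)⟩)
    rw [hXs, hYs, ← Finset.sum_add_distrib,
      Finset.sum_congr rfl (fun e he => hαβ e (hX.1 (Finset.mem_coe.mpr (Finset.mem_inter.mp he).1)))]
    simp [mul_comm]
  have key2 : θ * ((X' ∩ Y').card : ℝ) ≤ ∑ e ∈ X', α e + ∑ e ∈ Y', β e := by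
    have h1 : ∑ e ∈ X' ∩ Y', α e ≤ ∑ e ∈ X', α e :=
      Finset.sum_le_sum_of_subset_of_nonneg Finset.inter_subset_left (fun e _ _ => hα e)
    have h2 : ∑ e ∈ X' ∩ Y', β e ≤ ∑ e ∈ Y', β e :=
      Finset.sum_le_sum_of_subset_of_nonneg Finset.inter_subset_right (fun e _ _ => hβ e)
    have h3 : θ * ((X' ∩ Y').card : ℝ) = ∑ e ∈ X' ∩ Y', (α e + β e) := by
      rw [Finset.sum_congr rfl
        (fun e he => hαβ e (hX'.1 (Finset.mem_coe.mpr (Finset.mem_inter.mp he).1)))]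
      simp [mul_comm]
    rw [h3, Finset.sum_add_distrib]
    exact add_le_add h1 h2
  have hx := hXmin X' hX'
  have hy := hYmin Y' hY'
  rw [Finset.sum_sub_distrib, Finset.sum_sub_distrib] at hx hy
  linarith
end

section
/- Let G be a connected graph, C, c : E → ℝ, and let L be an integer. Suppose (X,Y) is a pair of spanning trees satisfying the sufficient pair optimality conditions for some θ ≥ 0 (i.e., there exist α,β ≥ 0 with α(e)+β(e)=θ for all e, X optimal for C-α, Y optimal for c-β, α vanishing on X\Y and β vanishing on Y\X), and additionally |X ∩ Y| ≥ L and θ·(|X ∩ Y| - L) = 0. Then (X,Y) minimizes ∑_{e∈X'} C(e) + ∑_{e∈Y'} c(e) over all pairs of spanning trees (X',Y') with |X' ∩ Y'| ≥ L. -/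
open Finset

/-! Weak Lagrangian duality. For every feasible pair `(X', Y')` the cost splits as the
reduced cost `∑_{X'} (C - α) + ∑_{Y'} (c - β)` plus `∑_{X'} α + ∑_{Y'} β ≥ θ |X' ∩ Y'| ≥ θ L`,
because `α, β ≥ 0` and `α + β = θ`. For `(X, Y)` both inequalities are equalities, by the
vanishing of `α` on `X \ Y` and `β` on `Y \ X` and by complementary slackness, while the reduced
cost is minimal by the tree optimality of `X` and `Y`. -/

section LagrangianBound

variable {ι : Type*} [DecidableEq ι] {A B : Finset ι} {α β : ι → ℝ} {θ : ℝ}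

lemma sum_inter_add_sum_inter_eq_mul_card (hsum : ∀ e ∈ A ∩ B, α e + β e = θ) :
    ∑ e ∈ A ∩ B, α e + ∑ e ∈ A ∩ B, β e = θ * #(A ∩ B) := by
  rw [← sum_add_distrib, sum_congr rfl hsum, sum_const, nsmul_eq_mul, mul_comm]

lemma mul_card_inter_le_sum_add_sum (hsum : ∀ e ∈ A ∩ B, α e + β e = θ)
    (hα : ∀ e ∈ A, 0 ≤ α e) (hβ : ∀ e ∈ B, 0 ≤ β e) :
    θ * #(A ∩ B) ≤ ∑ e ∈ A, α e + ∑ e ∈ B, β e := by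
  rw [← sum_inter_add_sum_inter_eq_mul_card hsum]
  gcongr ?_ + ?_
  · exact sum_le_sum_of_subset_of_nonneg inter_subset_left fun e he _ => hα e he
  · exact sum_le_sum_of_subset_of_nonneg inter_subset_right fun e he _ => hβ e he

lemma sum_add_sum_eq_mul_card_inter (hsum : ∀ e ∈ A ∩ B, α e + β e = θ)
    (hα : ∀ e ∈ A \ B, α e = 0) (hβ : ∀ e ∈ B \ A, β e = 0) :
    ∑ e ∈ A, α e + ∑ e ∈ B, β e = θ * #(A ∩ B) := by
  rw [← sum_inter_add_sum_inter_eq_mul_card hsum,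
    sum_subset inter_subset_left fun e he he' =>
      hα e (mem_sdiff.2 ⟨he, fun h => he' (mem_inter.2 ⟨he, h⟩)⟩),
    sum_subset inter_subset_right fun e he he' =>
      hβ e (mem_sdiff.2 ⟨he, fun h => he' (mem_inter.2 ⟨h, he⟩)⟩)]

end LagrangianBound

lemma IsSpanningTree.add_eq_of_mem_inter {V : Type*} {G : SimpleGraph V} [DecidableEq V]
    {A : Finset (Sym2 V)} (hA : IsSpanningTree G A) (B : Finset (Sym2 V)) {α β : Sym2 V → ℝ}
    {θ : ℝ} (hθ : ∀ e ∈ G.edgeSet, α e + β e = θ) : ∀ e ∈ A ∩ B, α e + β e = θ :=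
  fun e he => hθ e (hA.1 (mem_inter.1 he).1)

theorem stmt4_general {V : Type*} [Fintype V] [DecidableEq V] (G : SimpleGraph V)
    (C c : Sym2 V → ℝ) (θ : ℝ) (hθ : 0 ≤ θ) (L : ℤ)
    (X Y : Finset (Sym2 V)) (hX : IsSpanningTree G X)
    (α β : Sym2 V → ℝ) (hcond : SuffPairOpt G C c θ X Y α β)
    (hcs : θ * (((X ∩ Y).card : ℝ) - (L : ℝ)) = 0) :
    ∀ X' Y' : Finset (Sym2 V), IsSpanningTree G X' → IsSpanningTree G Y' →
      L ≤ ((X' ∩ Y').card : ℤ) →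
      ∑ e ∈ X, C e + ∑ e ∈ Y, c e ≤ ∑ e ∈ X', C e + ∑ e ∈ Y', c e := by
  intro X' Y' hX' hY' hL'
  obtain ⟨hα, hβ, hθE, hXopt, hYopt, hαX, hβY⟩ := hcond
  have hdual : ∑ e ∈ X, α e + ∑ e ∈ Y, β e = θ * #(X ∩ Y) :=
    sum_add_sum_eq_mul_card_inter (hX.add_eq_of_mem_inter Y hθE) hαX hβY
  have hdual' : θ * #(X' ∩ Y') ≤ ∑ e ∈ X', α e + ∑ e ∈ Y', β e :=
    mul_card_inter_le_sum_add_sum (hX'.add_eq_of_mem_inter Y' hθE)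
      (fun e _ => hα e) fun e _ => hβ e
  have hslack : θ * #(X ∩ Y) ≤ θ * #(X' ∩ Y') :=
    calc θ * #(X ∩ Y) = θ * L := by linear_combination hcs
      _ ≤ θ * #(X' ∩ Y') := mul_le_mul_of_nonneg_left (by exact_mod_cast hL') hθ
  have hXmin := hXopt X' hX'
  have hYmin := hYopt Y' hY'
  simp only [sum_sub_distrib] at hXmin hYmin
  linarith

/-- Theorems 1+2 of the paper: a Lagrangian-optimal pair that is feasible and
satisfies complementary slackness is optimal for the constrained recoverable problem. -/
theorem stmt4 {V : Type*} [Fintype V] [DecidableEq V] (G : SimpleGraph V)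
    (hG : G.Connected) (C c : Sym2 V → ℝ) (θ : ℝ) (hθ : 0 ≤ θ) (L : ℤ)
    (X Y : Finset (Sym2 V)) (hX : IsSpanningTree G X) (hY : IsSpanningTree G Y)
    (α β : Sym2 V → ℝ) (hcond : SuffPairOpt G C c θ X Y α β)
    (hfeas : L ≤ ((X ∩ Y).card : ℤ))
    (hcs : θ * (((X ∩ Y).card : ℝ) - (L : ℝ)) = 0) :
    ∀ X' Y' : Finset (Sym2 V), IsSpanningTree G X' → IsSpanningTree G Y' →
      L ≤ ((X' ∩ Y').card : ℤ) →
      ∑ e ∈ X, C e + ∑ e ∈ Y, c e ≤ ∑ e ∈ X', C e + ∑ e ∈ Y', c e :=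
  stmt4_general G C c θ hθ L X Y hX α β hcond hcs
end

section
/- Let T be a spanning tree of a connected graph G and let (e₁,f₁),...,(e_ℓ,f_ℓ) be pairs with all e₁,...,e_ℓ,f₁,...,f_ℓ distinct edges, e_i ∉ T, and f_i ∈ P_T(e_i) for each i. If T' = (T ∪ {e₁,...,e_ℓ}) \ {f₁,...,f_ℓ} is not a spanning tree of G, then there exist distinct indices j₁,...,j_κ ∈ {1,...,ℓ} with κ ≥ 2 such that f_{j_i} ∈ P_T(e_{j_{i+1}}) for all i ∈ {1,...,κ} (indices taken cyclically, so f_{j_κ} ∈ P_T(e_{j_1})). -/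
open Finset

/-!
If the pairs carry no directed cycle of the relation "`f i` lies on `P_T(e j)`", some pair
`(e s, f s)` has no other `f j` on its tree path `P_T(e s)`. The single exchange
`T + e s - f s` is again a spanning tree, and since the endpoints of `e s` stay connected
after deleting any other `f j`, deleting `f j` separates the same vertex pairs before and
after the exchange; so the tree paths through the remaining `f j`, and with them all the
hypotheses on the remaining pairs, are unchanged. Induction on the number of pairs shows
that the simultaneous exchange yields a spanning tree.
-/

open SimpleGraph Function

section Cycles

variable {α : Type*}

def HasCycleOn (r : α → α → Prop) (S : Set α) : Prop :=
  ∃ κ : ℕ, ∃ _ : 2 ≤ κ, ∃ g : Fin κ → α, (∀ i, g i ∈ S) ∧ Injective g ∧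
    ∀ i : Fin κ, r (g i) (g ⟨(i.1 + 1) % κ, Nat.mod_lt _ (Nat.zero_lt_two.trans_le ‹_›)⟩)

theorem HasCycleOn.mono {r r' : α → α → Prop} {S S' : Set α} (h : HasCycleOn r S)
    (hS : S ⊆ S') (hr : ∀ a ∈ S, ∀ b, r a b → r' a b) : HasCycleOn r' S' := by
  obtain ⟨κ, hκ, g, hgS, hg, hcyc⟩ := h
  exact ⟨κ, hκ, g, fun i => hS (hgS i), hg, fun i => hr _ (hgS i) _ (hcyc i)⟩

theorem Function.exists_mem_periodicPts [Finite α] [Nonempty α] (f : α → α) :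
    ∃ x, x ∈ periodicPts f := by
  obtain ⟨x₀⟩ := ‹Nonempty α›
  obtain ⟨m, n, hmn, heq⟩ := Finite.exists_ne_map_eq_of_infinite (f^[·] x₀)
  wlog hlt : m < n generalizing m n
  · exact this n m hmn.symm heq.symm (by omega)
  refine ⟨f^[m] x₀, n - m, by omega, ?_⟩
  rw [IsPeriodicPt, IsFixedPt, ← iterate_add_apply, Nat.sub_add_cancel hlt.le]
  exact heq.symm

theorem hasCycleOn_of_forall_exists {r : α → α → Prop} {S : Finset α}
    (hS : S.Nonempty) (h : ∀ i ∈ S, ∃ j ∈ S, j ≠ i ∧ r j i) : HasCycleOn r S := by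
  have : Nonempty S := hS.to_subtype
  choose pred hpred_ne hpred using fun i : S =>
    let ⟨j, hj, hji, hr⟩ := h i i.2
    (⟨⟨j, hj⟩, Subtype.coe_ne_coe.1 hji, hr⟩ : ∃ j : S, j ≠ i ∧ r j i)
  obtain ⟨x, hx⟩ := exists_mem_periodicPts pred
  set κ := minimalPeriod pred x
  have hκ : 2 ≤ κ := by
    have := minimalPeriod_pos_of_mem_periodicPts hx
    have : κ ≠ 1 := fun h1 => hpred_ne x (minimalPeriod_eq_one_iff_isFixedPt.1 h1)
    omega
  -- walking backwards along `pred` traces the cycle forwards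
  refine ⟨κ, hκ, fun i => pred^[κ - 1 - i] x, fun i => (pred^[_] x).2, ?_, fun i => ?_⟩
  · intro i j hij
    have := iterate_injOn_Iio_minimalPeriod (f := pred) (x := x)
      (show κ - 1 - i < κ by omega) (show κ - 1 - j < κ by omega) (Subtype.val_injective hij)
    exact Fin.ext (by omega)
  · have hsucc : pred^[κ - 1 - i] x = pred (pred^[κ - 1 - (i + 1) % κ] x) := by
      rw [← iterate_succ_apply' pred, ← iterate_mod_minimalPeriod_eq (n := _ + 1)]
      congr 1
      rcases (show i.1 + 1 < κ ∨ i.1 + 1 = κ by omega) with hlt | heq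
      · rw [Nat.mod_eq_of_lt hlt, Nat.mod_eq_of_lt (by omega)]; omega
      · rw [heq, Nat.mod_self, Nat.sub_zero, Nat.sub_add_cancel (by omega), Nat.mod_self]; omega
    simp only [hsucc]
    exact hpred _

end Cycles

namespace SimpleGraph

variable {V : Type*}

theorem reachable_le_of_forall_adj {H K : SimpleGraph V}
    (h : ∀ a b, H.Adj a b → K.Reachable a b) : H.Reachable ≤ K.Reachable := by
  intro u v huv
  rw [reachable_iff_reflTransGen] at huv ⊢
  exact Relation.ReflTransGen.lift' id
    (fun a b hab => (reachable_iff_reflTransGen a b).1 (h a b hab)) _ _ huv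

variable {A B : Set (Sym2 V)} {u v x y p q : V}

theorem reachable_insert_le (h : (fromEdgeSet B).Reachable p q) (hAB : A ⊆ B) :
    (fromEdgeSet (insert s(p, q) A)).Reachable ≤ (fromEdgeSet B).Reachable := by
  refine reachable_le_of_forall_adj fun a b hab => ?_
  rw [fromEdgeSet_adj, Set.mem_insert_iff, Sym2.eq_iff] at hab
  obtain ⟨(⟨rfl, rfl⟩ | ⟨rfl, rfl⟩) | hA, hne⟩ := hab
  · exact h
  · exact h.symm
  · exact ((fromEdgeSet_adj _).2 ⟨hAB hA, hne⟩).reachable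

theorem reachable_or_of_reachable_insert (h : (fromEdgeSet (insert s(x, y) A)).Reachable u v) :
    (fromEdgeSet A).Reachable u v ∨
      (fromEdgeSet A).Reachable u x ∧ (fromEdgeSet A).Reachable y v ∨
      (fromEdgeSet A).Reachable u y ∧ (fromEdgeSet A).Reachable x v := by
  obtain ⟨w⟩ := h
  induction w with
  | nil => exact .inl .rfl
  | cons hadj _ ih =>
    rw [fromEdgeSet_adj, Set.mem_insert_iff, Sym2.eq_iff] at hadj
    obtain ⟨hxy | hA, hne⟩ := hadj
    · grind [Reachable.trans, Reachable.symm, Reachable.refl]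
    · have hab := ((fromEdgeSet_adj _).2 ⟨hA, hne⟩).reachable
      grind [Reachable.trans]

theorem reachable_insert_swap (hpq : ¬ (fromEdgeSet A).Reachable p q)
    (h : (fromEdgeSet (insert s(x, y) A)).Reachable p q) :
    (fromEdgeSet (insert s(p, q) A)).Reachable x y := by
  have hmono : fromEdgeSet A ≤ fromEdgeSet (insert s(p, q) A) :=
    fromEdgeSet_mono (Set.subset_insert _ _)
  have hadj : (fromEdgeSet (insert s(p, q) A)).Reachable p q :=
    ((fromEdgeSet_adj _).2 ⟨Set.mem_insert _ _, by rintro rfl; exact hpq .rfl⟩).reachable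
  rcases reachable_or_of_reachable_insert h with h | ⟨hpx, hyq⟩ | ⟨hpy, hxq⟩
  · exact absurd h hpq
  · exact (hpx.mono hmono).symm.trans (hadj.trans (hyq.mono hmono).symm)
  · exact (hxq.mono hmono).trans (hadj.symm.trans (hpy.mono hmono))

theorem reachable_exchange_eq {f : Sym2 V} (hf : f ∈ B)
    (hpq : ¬ (fromEdgeSet (B \ {f})).Reachable p q) (h : (fromEdgeSet B).Reachable p q) :
    (fromEdgeSet (insert s(p, q) (B \ {f}))).Reachable = (fromEdgeSet B).Reachable := by
  have hB : insert f (B \ {f}) = B := Set.insert_sdiff_self_of_mem hf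
  induction f using Sym2.ind with | _ x y => ?_
  refine le_antisymm (reachable_insert_le h Set.sdiff_subset) ?_
  have := reachable_insert_le (reachable_insert_swap hpq (by rwa [hB])) (Set.subset_insert _ _)
  rwa [hB] at this

end SimpleGraph

theorem Finset.insert_erase_union_sdiff {β : Type*} [DecidableEq β] {a b : β}
    {T E F : Finset β} (hab : a ≠ b) (hbE : b ∉ E) :
    (insert a (T.erase b) ∪ E) \ F = (T ∪ insert a E) \ insert b F := by
  ext z
  simp only [mem_sdiff, mem_union, mem_insert, mem_erase]
  grind

section SpanningTrees

variable {V : Type*}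

theorem onTreePath_mk_iff {T : Finset (Sym2 V)} {p q : V} {f : Sym2 V} :
    OnTreePath T s(p, q) f ↔
      f ∈ T ∧ ¬ (fromEdgeSet ((T : Set (Sym2 V)) \ {f})).Reachable p q := by
  refine and_congr_right fun _ => ⟨fun h => h p q rfl, fun h u v huv => ?_⟩
  rcases Sym2.eq_iff.1 huv with ⟨rfl, rfl⟩ | ⟨rfl, rfl⟩
  exacts [h, fun h' => h h'.symm]

theorem card_edgeSet_fromEdgeSet {G : SimpleGraph V} {T : Finset (Sym2 V)}
    (hTG : (T : Set (Sym2 V)) ⊆ G.edgeSet) :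
    Nat.card (fromEdgeSet (T : Set (Sym2 V))).edgeSet = #T := by
  rw [edgeSet_fromEdgeSet, sdiff_eq_left.2, Nat.card_coe_set_eq, Set.ncard_coe_finset]
  exact Set.disjoint_left.2 fun z hz => G.not_isDiag_of_mem_edgeSet (hTG hz)

theorem IsSpanningTree.of_connected_of_card_eq [Finite V] {G : SimpleGraph V}
    {T T' : Finset (Sym2 V)} (hT : IsSpanningTree G T) (hT'G : (T' : Set (Sym2 V)) ⊆ G.edgeSet)
    (hconn : (fromEdgeSet (T' : Set (Sym2 V))).Connected) (hcard : #T' = #T) :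
    IsSpanningTree G T' := by
  refine ⟨hT'G, isTree_iff_connected_and_card.2 ⟨hconn, ?_⟩⟩
  rw [card_edgeSet_fromEdgeSet hT'G, hcard, ← card_edgeSet_fromEdgeSet hT.1]
  exact (isTree_iff_connected_and_card.1 hT.2).2

variable [DecidableEq V]

theorem IsSpanningTree.exchange [Finite V] {G : SimpleGraph V} {T : Finset (Sym2 V)}
    {e f : Sym2 V} (hT : IsSpanningTree G T) (heG : e ∈ G.edgeSet) (heT : e ∉ T)
    (hef : OnTreePath T e f) : IsSpanningTree G (insert e (T.erase f)) := by
  induction e using Sym2.ind with | _ p q => ?_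
  obtain ⟨hfT, hpq⟩ := onTreePath_mk_iff.1 hef
  have hconn := hT.2.connected
  have hreach := reachable_exchange_eq hfT hpq (hconn.preconnected p q)
  refine hT.of_connected_of_card_eq ?_ ?_ ?_
  · push_cast
    exact Set.insert_subset heG (Set.sdiff_subset.trans hT.1)
  · have := hconn.nonempty
    push_cast
    exact ⟨fun u v => hreach ▸ hconn.preconnected u v⟩
  · rw [card_insert_of_notMem (fun h => heT (mem_of_mem_erase h)), card_erase_add_one hfT]

theorem onTreePath_insert_erase_iff {T : Finset (Sym2 V)} {e f g : Sym2 V} (heT : e ∉ T)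
    (hef : OnTreePath T e f) (hgT : g ∈ T) (hgf : g ≠ f) (heg : ¬ OnTreePath T e g)
    (h : Sym2 V) : OnTreePath (insert e (T.erase f)) h g ↔ OnTreePath T h g := by
  induction e using Sym2.ind with | _ p q => ?_
  obtain ⟨hfT, hpq⟩ := onTreePath_mk_iff.1 hef
  have hre : (fromEdgeSet ((T : Set (Sym2 V)) \ {g})).Reachable p q := by
    simpa [onTreePath_mk_iff, hgT] using heg
  have hcut := reachable_exchange_eq (B := (T : Set (Sym2 V)) \ {g}) ⟨hfT, hgf.symm⟩
    (fun h => hpq (h.mono (fromEdgeSet_mono (by grind)))) hre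
  have heq : ((insert s(p, q) (T.erase f) : Finset (Sym2 V)) : Set (Sym2 V)) \ {g} =
      insert s(p, q) (((T : Set (Sym2 V)) \ {g}) \ {f}) := by
    ext
    simp only [coe_insert, coe_erase, Set.mem_sdiff, Set.mem_insert_iff, SetLike.mem_coe,
      Set.mem_singleton_iff]
    grind
  have hg : g ∈ insert s(p, q) (T.erase f) ↔ g ∈ T := by
    simp [hgf, hgT, ne_of_mem_of_not_mem hgT heT]
  unfold OnTreePath
  rw [hg, heq, hcut]

theorem isSpanningTree_multiExchange [Finite V] {ι : Type*} [DecidableEq ι]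
    {G : SimpleGraph V} {e f : ι → Sym2 V} (he : Injective e) (hf : Injective f)
    (hef : ∀ i j, e i ≠ f j) (heG : ∀ i, e i ∈ G.edgeSet) (S : Finset ι) :
    ∀ T, IsSpanningTree G T → (∀ i ∈ S, e i ∉ T) → (∀ i ∈ S, OnTreePath T (e i) (f i)) →
      ¬ HasCycleOn (fun a b => OnTreePath T (e b) (f a)) S →
      IsSpanningTree G ((T ∪ S.image e) \ S.image f) := by
  induction S using Finset.strongInduction with | H S ih => ?_
  intro T hT heT hfP hacyc
  rcases S.eq_empty_or_nonempty with rfl | hS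
  · simpa using hT
  obtain ⟨s, hsS, hsrc⟩ : ∃ s ∈ S, ∀ j ∈ S, j ≠ s → ¬ OnTreePath T (e s) (f j) := by
    by_contra! h
    exact hacyc (hasCycleOn_of_forall_exists hS h)
  have hpath : ∀ i ∈ S.erase s, ∀ h,
      OnTreePath (insert (e s) (T.erase (f s))) h (f i) ↔ OnTreePath T h (f i) :=
    fun i hi => onTreePath_insert_erase_iff (heT s hsS) (hfP s hsS)
      (hfP i (mem_of_mem_erase hi)).1 (hf.ne (ne_of_mem_erase hi))
      (hsrc i (mem_of_mem_erase hi) (ne_of_mem_erase hi))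
  have hexch := ih (S.erase s) (erase_ssubset hsS) _
    (hT.exchange (heG s) (heT s hsS) (hfP s hsS))
    (fun i hi => by simp [he.eq_iff, ne_of_mem_erase hi, heT i (mem_of_mem_erase hi)])
    (fun i hi => (hpath i hi _).2 (hfP i (mem_of_mem_erase hi)))
    (fun hc => hacyc (hc.mono (by simp) fun a ha _ hab => (hpath a ha _).1 hab))
  rwa [insert_erase_union_sdiff (hef s s) (by simp [hef]), ← image_insert,
    ← image_insert, insert_erase hsS] at hexch

end SpanningTrees

/-- Claim 1 of the paper: if a simultaneous multi-exchange on a spanning tree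
fails to yield a spanning tree, the cycle graph contains a directed cycle among the pairs. -/
theorem stmt6 {V : Type*} [Fintype V] [DecidableEq V] (G : SimpleGraph V)
    (T : Finset (Sym2 V)) (hT : IsSpanningTree G T)
    (ℓ : ℕ) (e f : Fin ℓ → Sym2 V)
    (hdist : ∀ i j : Fin ℓ, (e i = e j → i = j) ∧ (f i = f j → i = j) ∧ e i ≠ f j)
    (heG : ∀ i, e i ∈ G.edgeSet) (heT : ∀ i, e i ∉ T)
    (hfP : ∀ i, OnTreePath T (e i) (f i))
    (hnot : ¬ IsSpanningTree G
      ((T ∪ Finset.image e Finset.univ) \ Finset.image f Finset.univ)) :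
    ∃ κ : ℕ, ∃ _ : 2 ≤ κ, ∃ g : Fin κ → Fin ℓ, Function.Injective g ∧
      ∀ i : Fin κ,
        OnTreePath T (e (g ⟨(i.1 + 1) % κ, Nat.mod_lt _ (by omega)⟩)) (f (g i)) := by
  by_contra hno
  refine hnot (isSpanningTree_multiExchange (fun i j h => (hdist i j).1 h)
    (fun i j h => (hdist i j).2.1 h) (fun i j => (hdist i j).2.2) heG univ T hT
    (fun i _ => heT i) (fun i _ => hfP i) ?_)
  rintro ⟨κ, hκ, g, -, hg, hcyc⟩
  exact hno ⟨κ, hκ, g, hg, hcyc⟩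
end

section
/- Let (X,Y) satisfy the sufficient pair optimality conditions for θ ≥ 0 with reduced costs C* = C - α, c* = c - β, and let V^A be the node set of the admissible graph. Define, for δ > 0, new costs C_δ(e) = C*(e) - δ if v_e ∈ V^A, C_δ(e) = C*(e) otherwise, and c_δ(e) = c*(e) if v_e ∈ V^A, c_δ(e) = c*(e) - δ otherwise. Then there exists δ > 0 such that X satisfies the path optimality conditions for C_δ (i.e., C_δ(e) ≥ C_δ(f) for all e ∉ X and f ∈ P_X(e)) and Y satisfies the path optimality conditions for c_δ. -/
open Finset

open scoped Classical in
/-- Lemma 4 of the paper: for sufficiently small `δ > 0`, the dual adjustment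
(decreasing `C*` by `δ` on admissible nodes and `c*` by `δ` on non-admissible nodes)
preserves the path optimality conditions for both trees. -/
theorem stmt10 {V : Type*} [Fintype V] [DecidableEq V] (G : SimpleGraph V)
    (hG : G.Connected) (X Y : Finset (Sym2 V))
    (hX : IsSpanningTree G X) (hY : IsSpanningTree G Y)
    (Cs cs : Sym2 V → ℝ)
    (hXopt : PathOpt G X Cs) (hYopt : PathOpt G Y cs) :
    ∃ δ : ℝ, 0 < δ ∧
      PathOpt G X (fun e => if AdmNode X Y Cs cs e then Cs e - δ else Cs e) ∧
      PathOpt G Y (fun e => if AdmNode X Y Cs cs e then cs e else cs e - δ) := by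
  classical
  let A : Finset ℝ :=
    ((((univ : Finset (Sym2 V × Sym2 V)).filter fun p => Cs p.2 < Cs p.1).image
      fun p => Cs p.1 - Cs p.2) ∪
    (((univ : Finset (Sym2 V × Sym2 V)).filter fun p => cs p.2 < cs p.1).image
      fun p => cs p.1 - cs p.2)) ∪ {1}
  have hA1 : (1:ℝ) ∈ A := by simp [A]
  have hAne : A.Nonempty := ⟨1, hA1⟩
  set δ := A.min' hAne with hδdef
  have hApos : ∀ x ∈ A, 0 < x := by
    intro x hx
    simp only [A, mem_union, mem_image, mem_filter, mem_singleton] at hx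
    rcases hx with (⟨p, ⟨_, hp⟩, rfl⟩ | ⟨p, ⟨_, hp⟩, rfl⟩) | rfl
    · linarith
    · linarith
    · norm_num
  have hδpos : 0 < δ := hApos _ (A.min'_mem hAne)
  have hgapC : ∀ e f : Sym2 V, Cs f < Cs e → δ ≤ Cs e - Cs f := by
    intro e f h
    refine A.min'_le _ ?_
    simp only [A, mem_union, mem_image, mem_filter]
    exact Or.inl (Or.inl ⟨(e, f), ⟨mem_univ _, h⟩, rfl⟩)
  have hgapc : ∀ e f : Sym2 V, cs f < cs e → δ ≤ cs e - cs f := by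
    intro e f h
    refine A.min'_le _ ?_
    simp only [A, mem_union, mem_image, mem_filter]
    exact Or.inl (Or.inr ⟨(e, f), ⟨mem_univ _, h⟩, rfl⟩)
  refine ⟨δ, hδpos, ?_, ?_⟩
  · intro u v hGe heX f hf
    have hle : Cs f ≤ Cs s(u, v) := hXopt u v hGe heX f hf
    by_cases hfe : Cs f = Cs s(u, v)
    · -- if e admissible then f admissible
      by_cases he : AdmNode X Y Cs cs s(u, v)
      · have hfadm : AdmNode X Y Cs cs f := by
          obtain ⟨g, hg1, hg2, hg3⟩ := he
          exact ⟨g, hg1, hg2, hg3.tail (Or.inl ⟨heX, hf, hfe.symm⟩)⟩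
        simp only [he, hfadm, if_true]
        linarith
      · by_cases hfadm : AdmNode X Y Cs cs f <;>
          simp only [he, hfadm, if_true, if_false] <;> linarith
    · have hlt : Cs f < Cs s(u, v) := lt_of_le_of_ne hle hfe
      have := hgapC s(u, v) f hlt
      by_cases he : AdmNode X Y Cs cs s(u, v) <;>
        by_cases hfadm : AdmNode X Y Cs cs f <;>
        simp only [he, hfadm, if_true, if_false] <;> linarith
  · intro u v hGe heY f hf
    have hle : cs f ≤ cs s(u, v) := hYopt u v hGe heY f hf
    by_cases hfe : cs f = cs s(u, v)
    · -- if f admissible then e admissible (Y-arc from f to e)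
      by_cases hfadm : AdmNode X Y Cs cs f
      · have he : AdmNode X Y Cs cs s(u, v) := by
          obtain ⟨g, hg1, hg2, hg3⟩ := hfadm
          exact ⟨g, hg1, hg2, hg3.tail (Or.inr ⟨heY, hf, hfe.symm⟩)⟩
        simp only [he, hfadm, if_true]
        linarith
      · by_cases he : AdmNode X Y Cs cs s(u, v) <;>
          simp only [he, hfadm, if_true, if_false] <;> linarith
    · have hlt : cs f < cs s(u, v) := lt_of_le_of_ne hle hfe
      have := hgapc s(u, v) f hlt
      by_cases he : AdmNode X Y Cs cs s(u, v) <;>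
        by_cases hfadm : AdmNode X Y Cs cs f <;>
        simp only [he, hfadm, if_true, if_false] <;> linarith
end

section
/- Let Φ be a nonempty finite family of subsets of a finite set E, for each X ∈ Φ let Φ_X^k ⊆ Φ be a nonempty recovery set, and let U be any set of scenarios S : E → ℝ with c(e) ≤ S(e) ≤ c(e) + d(e) for all e and containing the nominal scenario S(e) = c(e). Define F(X) = ∑_{e∈X} C(e) + max_{S∈U} min_{Y∈Φ_X^k} ∑_{e∈Y} S(e). Suppose c(e) ≥ α·(c(e)+d(e)) for all e ∈ E with some constant α ∈ (0,1], C ≥ 0, and let (X̂, Ŷ) with Ŷ ∈ Φ_{X̂}^k minimize ∑_{e∈X} C(e) + ∑_{e∈Y} c(e) over all pairs (X,Y) with Y ∈ Φ_X^k. Then F(X̂) ≤ (1/α)·F(X) for every X ∈ Φ. -/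
open Finset

/-- Lemma 6 of the paper, general form: the optimal pair for the nominal
scenario is a `1/α`-approximation of the recoverable robust problem, for any scenario set
`U ⊆ [c, c+d]^E` containing the nominal scenario, provided `c ≥ α(c+d)`. -/
theorem stmt13 {E : Type*} [Fintype E] [DecidableEq E]
    (Φ : Finset (Finset E)) (hΦ : Φ.Nonempty)
    (rec : Finset E → Finset (Finset E))
    (hrec : ∀ X ∈ Φ, rec X ⊆ Φ ∧ (rec X).Nonempty)
    (C c d : E → ℝ) (hC : ∀ e, 0 ≤ C e) (hd : ∀ e, 0 ≤ d e)
    (U : Set (E → ℝ)) (hU : ∀ S ∈ U, ∀ e, c e ≤ S e ∧ S e ≤ c e + d e)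
    (hnom : c ∈ U)
    (α : ℝ) (hα0 : 0 < α) (hα1 : α ≤ 1)
    (hcd : ∀ e, α * (c e + d e) ≤ c e)
    (F : Finset E → ℝ)
    (hF : ∀ X, F X = ∑ e ∈ X, C e + sSup {w : ℝ | ∃ S ∈ U,
        w = sInf {u : ℝ | ∃ Y ∈ rec X, u = ∑ e ∈ Y, S e}})
    (Xh Yh : Finset E) (hXh : Xh ∈ Φ) (hYh : Yh ∈ rec Xh)
    (hopt : ∀ X ∈ Φ, ∀ Y ∈ rec X,
      ∑ e ∈ Xh, C e + ∑ e ∈ Yh, c e ≤ ∑ e ∈ X, C e + ∑ e ∈ Y, c e) :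
    ∀ X ∈ Φ, F Xh ≤ (1 / α) * F X := by
  intro X hX
  obtain ⟨hXsub, ⟨Y₀, hY₀⟩⟩ := hrec X hX
  have hα0' : (0:ℝ) ≤ 1/α := by positivity
  have hαinv : (1:ℝ) ≤ 1/α := by
    rw [le_div_iff₀ hα0]; linarith
  have hfin : ∀ (S : E → ℝ) (X' : Finset E),
      Set.Finite {u : ℝ | ∃ Y ∈ rec X', u = ∑ e ∈ Y, S e} := by
    intro S X'
    have : {u : ℝ | ∃ Y ∈ rec X', u = ∑ e ∈ Y, S e}
        = (fun Y : Finset E => ∑ e ∈ Y, S e) '' (rec X' : Set (Finset E)) := by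
      ext u; simp [eq_comm]
    rw [this]
    exact Set.Finite.image _ (rec X').finite_toSet
  -- bound on the inner inf for Xh
  have key1 : ∀ S ∈ U, sInf {u : ℝ | ∃ Y ∈ rec Xh, u = ∑ e ∈ Y, S e}
      ≤ (1/α) * ∑ e ∈ Yh, c e := by
    intro S hS
    have h1 : sInf {u : ℝ | ∃ Y ∈ rec Xh, u = ∑ e ∈ Y, S e} ≤ ∑ e ∈ Yh, S e :=
      csInf_le (hfin S Xh).bddBelow ⟨Yh, hYh, rfl⟩
    have h2 : ∑ e ∈ Yh, S e ≤ ∑ e ∈ Yh, (c e + d e) :=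
      Finset.sum_le_sum fun e _ => (hU S hS e).2
    have h3 : α * ∑ e ∈ Yh, (c e + d e) ≤ ∑ e ∈ Yh, c e := by
      rw [Finset.mul_sum]
      exact Finset.sum_le_sum fun e _ => hcd e
    have h4 : ∑ e ∈ Yh, (c e + d e) ≤ (1/α) * ∑ e ∈ Yh, c e := by
      rw [div_mul_eq_mul_div, le_div_iff₀ hα0]
      linarith
    linarith
  have key2 : sSup {w : ℝ | ∃ S ∈ U,
      w = sInf {u : ℝ | ∃ Y ∈ rec Xh, u = ∑ e ∈ Y, S e}} ≤ (1/α) * ∑ e ∈ Yh, c e := by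
    refine csSup_le ⟨_, ⟨c, hnom, rfl⟩⟩ ?_
    rintro w ⟨S, hS, rfl⟩
    exact key1 S hS
  -- the sup set for X is bounded above
  have key3 : BddAbove {w : ℝ | ∃ S ∈ U,
      w = sInf {u : ℝ | ∃ Y ∈ rec X, u = ∑ e ∈ Y, S e}} := by
    refine ⟨∑ e ∈ Y₀, (c e + d e), ?_⟩
    rintro w ⟨S, hS, rfl⟩
    calc sInf {u : ℝ | ∃ Y ∈ rec X, u = ∑ e ∈ Y, S e} ≤ ∑ e ∈ Y₀, S e :=
          csInf_le (hfin S X).bddBelow ⟨Y₀, hY₀, rfl⟩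
      _ ≤ ∑ e ∈ Y₀, (c e + d e) := Finset.sum_le_sum fun e _ => (hU S hS e).2
  have key4 : sInf {u : ℝ | ∃ Y ∈ rec X, u = ∑ e ∈ Y, c e}
      ≤ sSup {w : ℝ | ∃ S ∈ U, w = sInf {u : ℝ | ∃ Y ∈ rec X, u = ∑ e ∈ Y, S e}} :=
    le_csSup key3 ⟨c, hnom, rfl⟩
  have key5 : ∑ e ∈ Xh, C e + ∑ e ∈ Yh, c e
      ≤ ∑ e ∈ X, C e + sInf {u : ℝ | ∃ Y ∈ rec X, u = ∑ e ∈ Y, c e} := by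
    have : ∑ e ∈ Xh, C e + ∑ e ∈ Yh, c e - ∑ e ∈ X, C e
        ≤ sInf {u : ℝ | ∃ Y ∈ rec X, u = ∑ e ∈ Y, c e} := by
      refine le_csInf ⟨_, ⟨Y₀, hY₀, rfl⟩⟩ ?_
      rintro u ⟨Y, hY, rfl⟩
      linarith [hopt X hX Y hY]
    linarith
  have hCXh : (0:ℝ) ≤ ∑ e ∈ Xh, C e := Finset.sum_nonneg fun e _ => hC e
  rw [hF Xh, hF X]
  have step1 : ∑ e ∈ Xh, C e + sSup {w : ℝ | ∃ S ∈ U,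
      w = sInf {u : ℝ | ∃ Y ∈ rec Xh, u = ∑ e ∈ Y, S e}}
      ≤ (1/α) * (∑ e ∈ Xh, C e + ∑ e ∈ Yh, c e) := by
    have : ∑ e ∈ Xh, C e ≤ (1/α) * ∑ e ∈ Xh, C e := le_mul_of_one_le_left hCXh hαinv
    nlinarith [key2]
  have step2 : (1/α) * (∑ e ∈ Xh, C e + ∑ e ∈ Yh, c e)
      ≤ (1/α) * (∑ e ∈ X, C e + sSup {w : ℝ | ∃ S ∈ U,
        w = sInf {u : ℝ | ∃ Y ∈ rec X, u = ∑ e ∈ Y, S e}}) := by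
    apply mul_le_mul_of_nonneg_left _ hα0'
    linarith [key4, key5]
  linarith
end

section
/- In the setting of the budgeted scenario set U^I_2(Γ): for every subset Y ⊆ E and every scenario S ∈ U^I_2(Γ), ∑_{e∈Y} S(e) ≤ ∑_{e∈Y} c(e) + Γ; consequently max_{S∈U^I_2(Γ)} ∑_{e∈Y} S(e) - Γ ≤ ∑_{e∈Y} c(e). If moreover (X̂,Ŷ) is an optimal pair under the scenario S'(e) = min{c(e)+d(e), c(e)+Γ·d(e)/D} and Γ ≤ γ·F(X̂) for some γ ∈ [0,1), then F(X̂) ≤ (1/(1-γ))·F(X) for every X ∈ Φ, where F(X) = ∑_{e∈X} C(e) + max_{S∈U^I_2(Γ)} min_{Y∈Φ_X^k} ∑_{e∈Y} S(e). -/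
open Finset

/-- The budgeted interval uncertainty set `U^I_2(Γ)`. -/
def U2 {E : Type*} [Fintype E] (c d : E → ℝ) (Γ : ℝ) : Set (E → ℝ) :=
  {S | ∃ δ : E → ℝ, (∀ e, 0 ≤ δ e ∧ δ e ≤ d e) ∧ (∑ e, δ e) ≤ Γ ∧ ∀ e, S e = c e + δ e}

/-- Lemma 7(ii) of the paper, with the key inequality of its proof:
every scenario in `U^I_2(Γ)` exceeds the nominal costs by at most `Γ` in total, hence on any
subset; and if `Γ ≤ γ·F(X̂)`, the optimal pair under `S'` is a `1/(1-γ)`-approximation. -/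
theorem stmt15 {E : Type*} [Fintype E] [DecidableEq E]
    (Φ : Finset (Finset E)) (hΦ : Φ.Nonempty)
    (rec : Finset E → Finset (Finset E))
    (hrec : ∀ X ∈ Φ, rec X ⊆ Φ ∧ (rec X).Nonempty)
    (C c d : E → ℝ) (hC : ∀ e, 0 ≤ C e) (hd : ∀ e, 0 ≤ d e)
    (Γ : ℝ) (hΓ : 0 ≤ Γ) (hD : 0 < ∑ x, d x)
    (F : Finset E → ℝ)
    (hF : ∀ X, F X = ∑ e ∈ X, C e + sSup {w : ℝ | ∃ S ∈ U2 c d Γ,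
        w = sInf {u : ℝ | ∃ Y ∈ rec X, u = ∑ e ∈ Y, S e}})
    (S' : E → ℝ) (hS' : ∀ e, S' e = min (c e + d e) (c e + Γ * d e / ∑ x, d x))
    (Xh Yh : Finset E) (hXh : Xh ∈ Φ) (hYh : Yh ∈ rec Xh)
    (hopt : ∀ X ∈ Φ, ∀ Y ∈ rec X,
      ∑ e ∈ Xh, C e + ∑ e ∈ Yh, S' e ≤ ∑ e ∈ X, C e + ∑ e ∈ Y, S' e)
    (γ : ℝ) (hγ0 : 0 ≤ γ) (hγ1 : γ < 1) (hΓγ : Γ ≤ γ * F Xh) :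
    (∀ Y : Finset E, ∀ S ∈ U2 c d Γ, ∑ e ∈ Y, S e ≤ ∑ e ∈ Y, c e + Γ) ∧
    (∀ Y : Finset E,
      sSup {w : ℝ | ∃ S ∈ U2 c d Γ, w = ∑ e ∈ Y, S e} - Γ ≤ ∑ e ∈ Y, c e) ∧
    (∀ X ∈ Φ, F Xh ≤ (1 / (1 - γ)) * F X) := by
  classical
  have part1 : ∀ Y : Finset E, ∀ S ∈ U2 c d Γ, ∑ e ∈ Y, S e ≤ ∑ e ∈ Y, c e + Γ := by
    rintro Y S ⟨δ, hδ, hsum, hS⟩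
    have h1 : ∑ e ∈ Y, S e = ∑ e ∈ Y, c e + ∑ e ∈ Y, δ e := by
      simp [hS, Finset.sum_add_distrib]
    have h2 : ∑ e ∈ Y, δ e ≤ ∑ e, δ e :=
      Finset.sum_le_sum_of_subset_of_nonneg (Finset.subset_univ Y) (fun e _ _ => (hδ e).1)
    linarith
  have hc0 : c ∈ U2 c d Γ :=
    ⟨fun _ => 0, fun e => ⟨le_refl _, hd e⟩, by simpa using hΓ, fun e => by ring⟩
  set D := ∑ x, d x with hDdef
  have hS'mem : S' ∈ U2 c d Γ := by
    refine ⟨fun e => min (d e) (Γ * d e / D), fun e => ⟨?_, min_le_left _ _⟩, ?_, fun e => ?_⟩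
    · exact le_min (hd e) (div_nonneg (mul_nonneg hΓ (hd e)) hD.le)
    · calc ∑ e, min (d e) (Γ * d e / D) ≤ ∑ e, Γ * d e / D :=
            Finset.sum_le_sum (fun e _ => min_le_right _ _)
        _ = Γ := by
            rw [← Finset.sum_div, ← Finset.mul_sum, ← hDdef]
            field_simp
    · show S' e = c e + min (d e) (Γ * d e / D)
      rw [hS' e]
      rcases le_total (d e) (Γ * d e / D) with h | h
      · rw [min_eq_left (by linarith), min_eq_left h]
      · rw [min_eq_right (by linarith), min_eq_right h]
  have hcS' : ∀ Y : Finset E, ∑ e ∈ Y, c e ≤ ∑ e ∈ Y, S' e := by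
    intro Y
    refine Finset.sum_le_sum (fun e _ => ?_)
    rw [hS' e]
    exact le_min (by linarith [hd e])
      (by have := div_nonneg (mul_nonneg hΓ (hd e)) hD.le; linarith)
  -- description of the inner inf sets as finite sets
  have himg : ∀ (X : Finset E) (S : E → ℝ),
      {u : ℝ | ∃ Y ∈ rec X, u = ∑ e ∈ Y, S e}
        = ((rec X).image (fun Y => ∑ e ∈ Y, S e) : Finset ℝ) := by
    intro X S
    ext u
    simp [eq_comm]
  have part2 : ∀ Y : Finset E,
      sSup {w : ℝ | ∃ S ∈ U2 c d Γ, w = ∑ e ∈ Y, S e} - Γ ≤ ∑ e ∈ Y, c e := by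
    intro Y
    have hne : (∑ e ∈ Y, c e) ∈ {w : ℝ | ∃ S ∈ U2 c d Γ, w = ∑ e ∈ Y, S e} :=
      ⟨c, hc0, rfl⟩
    have hub : sSup {w : ℝ | ∃ S ∈ U2 c d Γ, w = ∑ e ∈ Y, S e} ≤ ∑ e ∈ Y, c e + Γ := by
      refine csSup_le ⟨_, hne⟩ ?_
      rintro w ⟨S, hS, rfl⟩
      exact part1 Y S hS
    linarith
  refine ⟨part1, part2, ?_⟩
  intro X hX
  obtain ⟨hXsub, ⟨Y0, hY0⟩⟩ := hrec X hX
  -- the inner inf for a fixed scenario S and feasible X'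
  have hinf_le : ∀ (X' : Finset E) (S : E → ℝ), ∀ Y ∈ rec X',
      sInf {u : ℝ | ∃ Y ∈ rec X', u = ∑ e ∈ Y, S e} ≤ ∑ e ∈ Y, S e := by
    intro X' S Y hY
    rw [himg]
    refine csInf_le (Finset.bddBelow _) ?_
    exact_mod_cast Finset.mem_image_of_mem _ hY
  -- key lower bound for F X
  have hlow : ∑ e ∈ Xh, C e + ∑ e ∈ Yh, S' e ≤ F X := by
    rw [hF X]
    have hbdd : BddAbove {w : ℝ | ∃ S ∈ U2 c d Γ,
        w = sInf {u : ℝ | ∃ Y ∈ rec X, u = ∑ e ∈ Y, S e}} := by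
      refine ⟨∑ e ∈ Y0, c e + Γ, ?_⟩
      rintro w ⟨S, hS, rfl⟩
      exact le_trans (hinf_le X S Y0 hY0) (part1 Y0 S hS)
    have hmem : sInf {u : ℝ | ∃ Y ∈ rec X, u = ∑ e ∈ Y, S' e}
        ∈ {w : ℝ | ∃ S ∈ U2 c d Γ,
            w = sInf {u : ℝ | ∃ Y ∈ rec X, u = ∑ e ∈ Y, S e}} := ⟨S', hS'mem, rfl⟩
    have h1 : ∑ e ∈ Xh, C e + ∑ e ∈ Yh, S' e - ∑ e ∈ X, C e
        ≤ sInf {u : ℝ | ∃ Y ∈ rec X, u = ∑ e ∈ Y, S' e} := by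
      rw [himg]
      refine le_csInf ?_ ?_
      · exact ⟨_, by exact_mod_cast Finset.mem_image_of_mem _ hY0⟩
      · rintro u hu
        rw [Finset.mem_coe, Finset.mem_image] at hu
        obtain ⟨Y, hY, rfl⟩ := hu
        have := hopt X hX Y hY
        linarith
    have h2 := le_csSup hbdd hmem
    linarith
  -- upper bound for F Xh
  have hup : F Xh ≤ ∑ e ∈ Xh, C e + ∑ e ∈ Yh, S' e + Γ := by
    rw [hF Xh]
    have hub : sSup {w : ℝ | ∃ S ∈ U2 c d Γ,
        w = sInf {u : ℝ | ∃ Y ∈ rec Xh, u = ∑ e ∈ Y, S e}} ≤ ∑ e ∈ Yh, S' e + Γ := by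
      refine csSup_le ⟨_, ⟨S', hS'mem, rfl⟩⟩ ?_
      rintro w ⟨S, hS, rfl⟩
      have h1 := hinf_le Xh S Yh hYh
      have h2 := part1 Yh S hS
      have h3 := hcS' Yh
      linarith
    linarith
  have hfin : (1 - γ) * F Xh ≤ F X := by nlinarith
  rw [div_mul_eq_mul_div, one_mul, le_div_iff₀ (by linarith : (0:ℝ) < 1 - γ)]
  linarith
end
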